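/- Let n, K ∈ ℕ with K ≥ 1, Δt > 0, ζ ∈ [1/2, 1], let M ∈ ℝ^{n×n} be symmetric positive definite and A ∈ ℝ^{n×n} symmetric positive semidefinite. Let e, ė : {0,…,K} → ℝⁿ and r : {1,…,K} → ℝⁿ satisfy e⁰ = 0, ė⁰ = 0 and, for every k ∈ {1,…,K}, the error scheme equations (1/Δt)·M(ė^k − ė^{k−1}) + A((1−ζ)e^{k−1} + ζe^k) = r^k and (1/Δt)(e^k − e^{k−1}) = (1−ζ)ė^{k−1} + ζė^k. Then for every k ∈ {1,…,K}, the energy norm satisfies ((ė^k)ᵀMė^k + (e^k)ᵀAe^k)^{1/2} ≤ 2Δt·Σ_{k'=1}^{k} ((r^{k'})ᵀM⁻¹r^{k'})^{1/2}. -/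

import Mathlib

/-!
Write `E_k` for the energy norm of `(e^k, ė^k)` and `v = (1 - ζ) ė^{k-1} + ζ ė^k`, which by the
second equation is `(e^k - e^{k-1}) / Δt`. Testing the first equation with `v` and using, for a
positive semidefinite `B`, the identity
`(b - a)ᵀ B ((1 - ζ) a + ζ b) = ½ (bᵀBb - aᵀBa) + (ζ - ½) (b - a)ᵀB(b - a)`
(the last term is nonnegative since `ζ ≥ ½`) gives `E_k² - E_{k-1}² ≤ 2 Δt vᵀr^k`. Cauchy–Schwarz in
the `M`-inner product bounds `vᵀr^k` by `‖r^k‖_{M⁻¹} ((1 - ζ) E_{k-1} + ζ E_k)`, whence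
`E_k ≤ E_{k-1} + 2 Δt ‖r^k‖_{M⁻¹}`; this telescopes from `E_0 = 0`.
-/

open Matrix Finset

namespace Matrix

variable {ι : Type*} [Fintype ι] {B : Matrix ι ι ℝ}

lemma IsHermitian.dotProduct_mulVec_comm (hB : B.IsHermitian) (x y : ι → ℝ) :
    x ⬝ᵥ (B *ᵥ y) = y ⬝ᵥ (B *ᵥ x) := by
  rw [dotProduct_mulVec, ← mulVec_transpose, ← conjTranspose_eq_transpose_of_trivial, hB.eq,
    dotProduct_comm]

lemma PosSemidef.dotProduct_mulVec_self_nonneg (hB : B.PosSemidef) (x : ι → ℝ) :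
    0 ≤ x ⬝ᵥ (B *ᵥ x) := by
  simpa using hB.dotProduct_mulVec_nonneg x

lemma PosSemidef.sq_dotProduct_mulVec_le (hB : B.PosSemidef) (x y : ι → ℝ) :
    (x ⬝ᵥ (B *ᵥ y)) ^ 2 ≤ (x ⬝ᵥ (B *ᵥ x)) * (y ⬝ᵥ (B *ᵥ y)) := by
  classical
  calc (x ⬝ᵥ (B *ᵥ y)) ^ 2 = (x ⬝ᵥ (B *ᵥ y)) * (y ⬝ᵥ (B *ᵥ x)) := by
        rw [sq, hB.isHermitian.dotProduct_mulVec_comm y x]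
    _ ≤ _ := by
      simpa only [toBilin'_apply'] using (toBilin' B).apply_mul_apply_le_of_forall_zero_le
        (fun z => by simpa only [toBilin'_apply'] using hB.dotProduct_mulVec_self_nonneg z) x y

lemma PosDef.dotProduct_le_sqrt_mul_sqrt_inv [DecidableEq ι] (hB : B.PosDef) (r u : ι → ℝ) :
    r ⬝ᵥ u ≤ √(u ⬝ᵥ (B *ᵥ u)) * √(r ⬝ᵥ (B⁻¹ *ᵥ r)) := by
  set w := B⁻¹ *ᵥ r
  have hw : B *ᵥ w = r := by
    rw [mulVec_mulVec, mul_nonsing_inv _ ((isUnit_iff_isUnit_det B).mp hB.isUnit), one_mulVec]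
  have hcs := hB.posSemidef.sq_dotProduct_mulVec_le u w
  rw [hw, dotProduct_comm w r] at hcs
  rw [dotProduct_comm, ← Real.sqrt_mul (hB.posSemidef.dotProduct_mulVec_self_nonneg u)]
  exact Real.le_sqrt_of_sq_le hcs

lemma PosSemidef.half_sub_le_dotProduct_mulVec_convexComb (hB : B.PosSemidef) {ζ : ℝ}
    (hζ : 1 / 2 ≤ ζ) (a b : ι → ℝ) :
    (b ⬝ᵥ (B *ᵥ b) - a ⬝ᵥ (B *ᵥ a)) / 2 ≤ (b - a) ⬝ᵥ (B *ᵥ ((1 - ζ) • a + ζ • b)) := by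
  have hdiff := hB.dotProduct_mulVec_self_nonneg (b - a)
  have hsymm := hB.isHermitian.dotProduct_mulVec_comm a b
  simp only [mulVec_add, mulVec_sub, mulVec_smul, sub_dotProduct, dotProduct_sub,
    dotProduct_add, dotProduct_smul, smul_eq_mul] at hdiff ⊢
  nlinarith

end Matrix

lemma le_add_of_sq_sub_sq_le_convexComb {E F c ζ : ℝ} (hF : 0 ≤ F) (hc : 0 ≤ c) (hζ : ζ ≤ 1)
    (h : E ^ 2 - F ^ 2 ≤ c * ((1 - ζ) * F + ζ * E)) :
    E ≤ F + c := by
  rcases le_or_gt E F with hEF | hFE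
  · linarith
  · have hcomb : (1 - ζ) * F + ζ * E ≤ E := by nlinarith
    have hsum : 0 < E + F := by linarith
    nlinarith [mul_le_mul_of_nonneg_left hcomb hc]

lemma le_sum_Icc_of_le_add {u d : ℕ → ℝ} {K : ℕ} (h₀ : u 0 ≤ 0)
    (h : ∀ k, 1 ≤ k → k ≤ K → u k ≤ u (k - 1) + d k) :
    ∀ k ≤ K, u k ≤ ∑ i ∈ Icc 1 k, d i := by
  intro k
  induction k with
  | zero => simpa using h₀
  | succ k ih =>
    intro hk
    rw [sum_Icc_succ_top (Nat.le_add_left 1 k)]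
    have hstep := h (k + 1) (Nat.le_add_left 1 k) hk
    rw [Nat.add_sub_cancel] at hstep
    linarith [ih (by omega)]

section EnergyEstimate

variable {ι : Type*} [Fintype ι] {M A : Matrix ι ι ℝ}

noncomputable def energyNorm (M A : Matrix ι ι ℝ) (x v : ι → ℝ) : ℝ :=
  √(v ⬝ᵥ (M *ᵥ v) + x ⬝ᵥ (A *ᵥ x))

lemma sq_energyNorm (hM : M.PosSemidef) (hA : A.PosSemidef) (x v : ι → ℝ) :
    energyNorm M A x v ^ 2 = v ⬝ᵥ (M *ᵥ v) + x ⬝ᵥ (A *ᵥ x) :=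
  Real.sq_sqrt <|
    add_nonneg (hM.dotProduct_mulVec_self_nonneg v) (hA.dotProduct_mulVec_self_nonneg x)

variable [DecidableEq ι]

noncomputable def dualNorm (M : Matrix ι ι ℝ) (r : ι → ℝ) : ℝ :=
  √(r ⬝ᵥ (M⁻¹ *ᵥ r))

lemma dualNorm_nonneg (r : ι → ℝ) : 0 ≤ dualNorm M r := Real.sqrt_nonneg _

lemma dotProduct_le_dualNorm_mul_energyNorm (hM : M.PosDef) (hA : A.PosSemidef)
    (r x v : ι → ℝ) : r ⬝ᵥ v ≤ dualNorm M r * energyNorm M A x v := by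
  calc r ⬝ᵥ v ≤ √(v ⬝ᵥ (M *ᵥ v)) * dualNorm M r := hM.dotProduct_le_sqrt_mul_sqrt_inv r v
    _ ≤ energyNorm M A x v * dualNorm M r :=
      mul_le_mul_of_nonneg_right
        (Real.sqrt_le_sqrt (le_add_of_nonneg_right (hA.dotProduct_mulVec_self_nonneg x)))
        (dualNorm_nonneg r)
    _ = _ := mul_comm _ _

variable {Δt ζ : ℝ} {a b x y r : ι → ℝ}

lemma sq_energyNorm_sub_sq_le (hΔt : 0 < Δt) (hζ : ζ ∈ Set.Icc (1 / 2 : ℝ) 1)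
    (hM : M.PosDef) (hA : A.PosSemidef)
    (hr : (1 / Δt) • (M *ᵥ (b - a)) + A *ᵥ ((1 - ζ) • x + ζ • y) = r)
    (hv : (1 / Δt) • (y - x) = (1 - ζ) • a + ζ • b) :
    energyNorm M A y b ^ 2 - energyNorm M A x a ^ 2 ≤
      2 * Δt * dualNorm M r * ((1 - ζ) * energyNorm M A x a + ζ * energyNorm M A y b) := by
  obtain ⟨hζ₁, hζ₂⟩ := hζ
  set v := (1 - ζ) • a + ζ • b
  have balance : v ⬝ᵥ r = (1 / Δt) * ((b - a) ⬝ᵥ (M *ᵥ v)) +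
      (1 / Δt) * ((y - x) ⬝ᵥ (A *ᵥ ((1 - ζ) • x + ζ • y))) := by
    rw [← hr, dotProduct_add, dotProduct_smul, smul_eq_mul,
      hM.isHermitian.dotProduct_mulVec_comm v, ← hv, smul_dotProduct, smul_eq_mul]
  have dissipM := hM.posSemidef.half_sub_le_dotProduct_mulVec_convexComb hζ₁ a b
  have dissipA := hA.half_sub_le_dotProduct_mulVec_convexComb hζ₁ x y
  have power : v ⬝ᵥ r ≤
      dualNorm M r * ((1 - ζ) * energyNorm M A x a + ζ * energyNorm M A y b) := by
    have hva : v ⬝ᵥ r = (1 - ζ) * (r ⬝ᵥ a) + ζ * (r ⬝ᵥ b) := by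
      simp only [v, dotProduct_comm _ r, dotProduct_add, dotProduct_smul, smul_eq_mul]
    rw [hva, mul_add, mul_left_comm, mul_left_comm (dualNorm M r) ζ]
    gcongr ?_ + ?_
    · exact mul_le_mul_of_nonneg_left (dotProduct_le_dualNorm_mul_energyNorm hM hA r x a)
        (by linarith)
    · exact mul_le_mul_of_nonneg_left (dotProduct_le_dualNorm_mul_energyNorm hM hA r y b)
        (by linarith)
  rw [sq_energyNorm hM.posSemidef hA, sq_energyNorm hM.posSemidef hA]
  have dissip : (1 / Δt) * ((b ⬝ᵥ (M *ᵥ b) - a ⬝ᵥ (M *ᵥ a)) / 2 +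
      (y ⬝ᵥ (A *ᵥ y) - x ⬝ᵥ (A *ᵥ x)) / 2) ≤ v ⬝ᵥ r := by
    rw [balance, ← mul_add]
    gcongr
  calc b ⬝ᵥ (M *ᵥ b) + y ⬝ᵥ (A *ᵥ y) - (a ⬝ᵥ (M *ᵥ a) + x ⬝ᵥ (A *ᵥ x))
      = 2 * Δt * ((1 / Δt) * ((b ⬝ᵥ (M *ᵥ b) - a ⬝ᵥ (M *ᵥ a)) / 2 +
          (y ⬝ᵥ (A *ᵥ y) - x ⬝ᵥ (A *ᵥ x)) / 2)) := by
        field_simp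
        ring
    _ ≤ 2 * Δt * (v ⬝ᵥ r) := by gcongr
    _ ≤ 2 * Δt * (dualNorm M r * ((1 - ζ) * energyNorm M A x a + ζ * energyNorm M A y b)) := by
        gcongr
    _ = _ := by ring

lemma energyNorm_le_add (hΔt : 0 < Δt) (hζ : ζ ∈ Set.Icc (1 / 2 : ℝ) 1)
    (hM : M.PosDef) (hA : A.PosSemidef)
    (hr : (1 / Δt) • (M *ᵥ (b - a)) + A *ᵥ ((1 - ζ) • x + ζ • y) = r)
    (hv : (1 / Δt) • (y - x) = (1 - ζ) • a + ζ • b) :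
    energyNorm M A y b ≤ energyNorm M A x a + 2 * Δt * dualNorm M r :=
  le_add_of_sq_sub_sq_le_convexComb (Real.sqrt_nonneg _)
    (mul_nonneg (by positivity) (dualNorm_nonneg r)) hζ.2
    (sq_energyNorm_sub_sq_le hΔt hζ hM hA hr hv)

end EnergyEstimate

theorem error_scheme_pointwise_apost_estimate_general (n K : ℕ)
    (Δt : ℝ) (hΔt : 0 < Δt) (ζ : ℝ) (hζ : ζ ∈ Set.Icc (1 / 2 : ℝ) 1)
    (M A : Matrix (Fin n) (Fin n) ℝ) (hM : M.PosDef) (hA : A.PosSemidef)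
    (e de r : ℕ → Fin n → ℝ)
    (he0 : e 0 = 0) (hde0 : de 0 = 0)
    (h1 : ∀ k, 1 ≤ k → k ≤ K →
      (1 / Δt) • (M *ᵥ (de k - de (k - 1))) +
        A *ᵥ ((1 - ζ) • e (k - 1) + ζ • e k) = r k)
    (h2 : ∀ k, 1 ≤ k → k ≤ K →
      (1 / Δt) • (e k - e (k - 1)) = (1 - ζ) • de (k - 1) + ζ • de k) :
    ∀ k, 1 ≤ k → k ≤ K →
      Real.sqrt (de k ⬝ᵥ (M *ᵥ de k) + e k ⬝ᵥ (A *ᵥ e k)) ≤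
        2 * Δt * ∑ k' ∈ Finset.Icc 1 k, Real.sqrt (r k' ⬝ᵥ (M⁻¹ *ᵥ r k')) := by
  intro k _ hk
  rw [mul_sum]
  refine le_sum_Icc_of_le_add (u := fun k => energyNorm M A (e k) (de k))
    (d := fun k => 2 * Δt * dualNorm M (r k)) ?_ ?_ k hk
  · simp [energyNorm, he0, hde0]
  · exact fun j hj hjK => energyNorm_le_add hΔt hζ hM hA (h1 j hj hjK) (h2 j hj hjK)

/-- Pointwise-in-time a posteriori energy error estimate for the ζ-scheme
(`ζ ∈ [1/2,1]`, `M` symmetric positive definite, `A` symmetric positive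
semidefinite), for trajectories with zero initial error:
for every `k ∈ {1,…,K}`,
`((ė^k)ᵀMė^k + (e^k)ᵀAe^k)^{1/2} ≤ 2Δt·Σ_{k'=1}^{k} ((r^{k'})ᵀM⁻¹r^{k'})^{1/2}`. -/
theorem error_scheme_pointwise_apost_estimate (n K : ℕ) (hK : 1 ≤ K)
    (Δt : ℝ) (hΔt : 0 < Δt) (ζ : ℝ) (hζ : ζ ∈ Set.Icc (1 / 2 : ℝ) 1)
    (M A : Matrix (Fin n) (Fin n) ℝ) (hM : M.PosDef) (hA : A.PosSemidef)
    (e de r : ℕ → Fin n → ℝ)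
    (he0 : e 0 = 0) (hde0 : de 0 = 0)
    (h1 : ∀ k, 1 ≤ k → k ≤ K →
      (1 / Δt) • (M *ᵥ (de k - de (k - 1))) +
        A *ᵥ ((1 - ζ) • e (k - 1) + ζ • e k) = r k)
    (h2 : ∀ k, 1 ≤ k → k ≤ K →
      (1 / Δt) • (e k - e (k - 1)) = (1 - ζ) • de (k - 1) + ζ • de k) :
    ∀ k, 1 ≤ k → k ≤ K →
      Real.sqrt (de k ⬝ᵥ (M *ᵥ de k) + e k ⬝ᵥ (A *ᵥ e k)) ≤
        2 * Δt * ∑ k' ∈ Finset.Icc 1 k, Real.sqrt (r k' ⬝ᵥ (M⁻¹ *ᵥ r k')) :=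
  error_scheme_pointwise_apost_estimate_general n K Δt hΔt ζ hζ M A hM hA e de r he0 hde0 h1 h2
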